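/- arXiv:math/9812128 — 3 statements merged into one kernel-verified Lean document; each statement's English description precedes it below -/
import Mathlib

section
/- There do not exist homogeneous polynomials P, Q, R ∈ ℂ[a,b,c], not all zero and of the same degree, such that a·P² + b·Q² + c·R² = 0 identically. -/
open MvPolynomial

/-!
Over a domain, `∑ₖ Xₖ Fₖ² = 0` forces every `Fₖ = 0` (by induction on the number of terms).
Setting `Xᵢ = 0` kills the `i`-th term, so by induction `Xᵢ` divides every other `Fₖ`; then
`Xᵢ² ∣ Xᵢ Fᵢ²`, and primality of `Xᵢ` gives `Xᵢ ∣ Fᵢ`. Dividing every `Fₖ` by `Xᵢ` yields a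
new solution with smaller `Xᵢ`-degree of `Fᵢ`, so infinite descent makes `Fᵢ = 0`.
-/

namespace MvPolynomial

variable {R σ : Type*} [CommRing R] [DecidableEq σ]

noncomputable def killX (i : σ) : MvPolynomial σ R →ₐ[R] MvPolynomial σ R :=
  aeval (Function.update X i 0)

section killX

variable {i j : σ}

@[simp]
theorem killX_X_self : killX i (X i : MvPolynomial σ R) = 0 := by
  simp [killX]

theorem killX_X_of_ne (h : j ≠ i) : killX i (X j : MvPolynomial σ R) = X j := by
  simp [killX, h]

theorem X_dvd_sub_killX (p : MvPolynomial σ R) : X i ∣ p - killX i p := by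
  induction p using MvPolynomial.induction_on with
  | C a => simp [killX]
  | add p q hp hq => simpa only [map_add, add_sub_add_comm] using dvd_add hp hq
  | mul_X p j hp =>
    rw [map_mul]
    by_cases hj : j = i
    · subst hj
      simp
    · rw [killX_X_of_ne hj, ← sub_mul]
      exact dvd_mul_of_dvd_left hp _

theorem X_dvd_iff_killX_eq_zero {p : MvPolynomial σ R} : X i ∣ p ↔ killX i p = 0 := by
  refine ⟨?_, fun h => by simpa [h] using X_dvd_sub_killX (i := i) p⟩
  rintro ⟨q, rfl⟩
  simp

end killX

variable [IsDomain R]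

section descent

variable {i : σ} {t : Finset σ} {F : σ → MvPolynomial σ R}

theorem X_dvd_of_sum_X_mul_sq_insert_eq_zero (hi : i ∉ t)
    (ht : ∀ G : σ → MvPolynomial σ R, ∑ k ∈ t, X k * G k ^ 2 = 0 → ∀ k ∈ t, G k = 0)
    (h : ∑ k ∈ insert i t, X k * F k ^ 2 = 0) : ∀ k ∈ insert i t, X i ∣ F k := by
  rw [Finset.sum_insert hi] at h
  have hkill : ∑ k ∈ t, X k * killX i (F k) ^ 2 = 0 := by
    have := congrArg (killX i) h
    rw [map_add, map_mul, killX_X_self, zero_mul, zero_add, map_sum, map_zero] at this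
    rw [← this]
    refine Finset.sum_congr rfl fun k hk => ?_
    rw [map_mul, map_pow, killX_X_of_ne (ne_of_mem_of_not_mem hk hi)]
  have hrest : ∀ k ∈ t, X i ∣ F k := fun k hk =>
    X_dvd_iff_killX_eq_zero.mpr (ht _ hkill k hk)
  have hsq : X i * X i ∣ X i * F i ^ 2 := by
    rw [eq_neg_of_add_eq_zero_left h, dvd_neg]
    exact Finset.dvd_sum fun k hk => dvd_mul_of_dvd_right
      (by simpa [sq] using mul_dvd_mul (hrest k hk) (hrest k hk)) _
  have hFi : X i ∣ F i :=
    X_prime.dvd_of_dvd_pow ((mul_dvd_mul_iff_left (X_ne_zero i)).mp hsq)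
  exact fun k hk => (Finset.mem_insert.mp hk).elim (· ▸ hFi) (hrest k)

theorem eq_zero_of_sum_X_mul_sq_insert_eq_zero (hi : i ∉ t)
    (ht : ∀ G : σ → MvPolynomial σ R, ∑ k ∈ t, X k * G k ^ 2 = 0 → ∀ k ∈ t, G k = 0)
    (h : ∑ k ∈ insert i t, X k * F k ^ 2 = 0) : F i = 0 := by
  induction hn : degreeOf i (F i) using Nat.strong_induction_on generalizing F with
  | _ n ih =>
  by_contra hFi
  choose! G hG using X_dvd_of_sum_X_mul_sq_insert_eq_zero hi ht h
  have hGsum : ∑ k ∈ insert i t, X k * G k ^ 2 = 0 := by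
    have hsum : X i ^ 2 * ∑ k ∈ insert i t, X k * G k ^ 2 = 0 := by
      rw [← h, Finset.mul_sum]
      exact Finset.sum_congr rfl fun k hk => by rw [hG k hk]; ring
    exact (mul_eq_zero.mp hsum).resolve_left (pow_ne_zero 2 (X_ne_zero i))
  have hGi : F i = G i * X i := by rw [hG i (Finset.mem_insert_self i t), mul_comm]
  have hGi0 : G i ≠ 0 := by rintro h0; exact hFi (by rw [hGi, h0, zero_mul])
  have hdeg : degreeOf i (F i) = degreeOf i (G i) + 1 := by
    rw [hGi, (degreeOf_mul_X_eq_degreeOf_add_one_iff i (G i)).mpr hGi0]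
  exact hGi0 (ih _ (by omega) hGsum rfl)

end descent

theorem eq_zero_of_sum_X_mul_sq_eq_zero (s : Finset σ) {F : σ → MvPolynomial σ R}
    (h : ∑ k ∈ s, X k * F k ^ 2 = 0) : ∀ k ∈ s, F k = 0 := by
  induction s using Finset.induction_on generalizing F with
  | empty => simp
  | insert i t hi ih =>
    have hFi := eq_zero_of_sum_X_mul_sq_insert_eq_zero hi (fun G => ih) h
    rw [Finset.sum_insert hi, hFi, zero_pow two_ne_zero, mul_zero, zero_add] at h
    exact Finset.forall_mem_insert _ _ _ |>.mpr ⟨hFi, ih h⟩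

end MvPolynomial

/-- There are no homogeneous polynomials `P, Q, R ∈ ℂ[a,b,c]` of the same
degree, not all zero, with `a·P² + b·Q² + c·R² = 0`. -/
theorem no_section_of_conic_bundle :
    ¬ ∃ (d : ℕ) (P Q R : MvPolynomial (Fin 3) ℂ),
      P.IsHomogeneous d ∧ Q.IsHomogeneous d ∧ R.IsHomogeneous d ∧
      ¬(P = 0 ∧ Q = 0 ∧ R = 0) ∧
      X 0 * P ^ 2 + X 1 * Q ^ 2 + X 2 * R ^ 2 = 0 := by
  rintro ⟨-, P, Q, R, -, -, -, hne, h⟩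
  have hzero := eq_zero_of_sum_X_mul_sq_eq_zero Finset.univ (F := ![P, Q, R])
    (by simpa [Fin.sum_univ_three] using h)
  exact hne ⟨hzero 0 (Finset.mem_univ _), hzero 1 (Finset.mem_univ _),
    hzero 2 (Finset.mem_univ _)⟩
end

section
/- Let V be a complex vector space of dimension n ≥ 2 and p ≥ 2 an integer. Let ψ₁, ψ₂ ∈ S²V* be linearly independent quadratic forms. Then it is not the case that every linear combination λψ₁^p + μψ₂^p (λ, μ ∈ ℂ) is of the form ψ^p for some quadratic form ψ ∈ S²V*. -/
/-!
Write `ψ₁ = g a`, `ψ₂ = g b` with `a`, `b` coprime; then every `a ^ p - c b ^ p` is a `p`-th power.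
Since `a ^ p - d ^ p b ^ p = ∏ i, (a - ζ ^ i d b)` with pairwise coprime factors, every `a - d b`
with `d ≠ 0` is a `p`-th power. Doing this once more for `α ^ p = a - b`, `β ^ p = a + b`, whose
pencil consists of multiples of the `a - c b`, makes `α - d β` a `p`-th power for two values of `d`.
As `deg α, deg β ≤ 1 < p`, these are constants, hence so are `α`, `β`, `a` and `b`, making `ψ₁`
and `ψ₂` proportional.
-/

open MvPolynomial Finset

section Algebra

variable {K A : Type*} [Field K] [CommRing A] [Algebra K A]

theorem Subalgebra.mem_bot_of_sub_smul_mem_bot {a b : A} {u v : K} (huv : u ≠ v)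
    (hu : a - u • b ∈ (⊥ : Subalgebra K A)) (hv : a - v • b ∈ (⊥ : Subalgebra K A)) :
    a ∈ (⊥ : Subalgebra K A) ∧ b ∈ (⊥ : Subalgebra K A) := by
  have hb : b = (v - u)⁻¹ • ((a - u • b) - (a - v • b)) := by
    rw [show a - u • b - (a - v • b) = (v - u) • b by module, smul_smul,
      inv_mul_cancel₀ (sub_ne_zero.mpr huv.symm), one_smul]
  have hb' : b ∈ (⊥ : Subalgebra K A) := hb ▸ Subalgebra.smul_mem _ (sub_mem hu hv) _
  exact ⟨by simpa using add_mem hu (Subalgebra.smul_mem _ hb' u), hb'⟩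

theorem IsRelPrime.sub_smul_sub_smul {a b : A} (h : IsRelPrime a b) {u v : K} (huv : u ≠ v) :
    IsRelPrime (a - u • b) (a - v • b) := by
  intro x hxu hxv
  have hxb : x ∣ b := by
    have : x ∣ (v - u) • b := by
      convert dvd_sub hxu hxv using 1; module
    rwa [Algebra.smul_def,
      ((sub_ne_zero.mpr huv.symm).isUnit.map (algebraMap K A)).dvd_mul_left] at this
  exact h (by simpa [Algebra.smul_def] using dvd_add hxu (hxb.mul_left (algebraMap K A u))) hxb

theorem exists_smul_pow_eq_pow [IsAlgClosed K] {p : ℕ} (hp : p ≠ 0) (k : K) (e : A) :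
    ∃ e' : A, k • e ^ p = e' ^ p := by
  obtain ⟨r, rfl⟩ := IsAlgClosed.exists_pow_nat_eq k (Nat.pos_of_ne_zero hp)
  exact ⟨r • e, (smul_pow r e p).symm⟩

theorem IsPrimitiveRoot.pow_sub_smul_pow_eq_prod [IsDomain A] {ζ : K} {p : ℕ}
    (hζ : IsPrimitiveRoot ζ p) (hp : 0 < p) (d : K) (x y : A) :
    x ^ p - d ^ p • y ^ p = ∏ i ∈ range p, (x - (ζ ^ i * d) • y) := by
  have := congrArg (Polynomial.eval x) <|
    X_pow_sub_C_eq_prod (hζ.map_of_injective (algebraMap K A).injective) hp (α := d • y) rfl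
  simpa [Polynomial.eval_prod, Algebra.smul_def, mul_assoc, mul_pow] using this

theorem not_linearIndependent_mul_of_mem_bot (g : A) {a b : A}
    (ha : a ∈ (⊥ : Subalgebra K A)) (hb : b ∈ (⊥ : Subalgebra K A)) :
    ¬ LinearIndependent K ![g * a, g * b] := by
  obtain ⟨α, rfl⟩ := Algebra.mem_bot.mp ha
  obtain ⟨β, rfl⟩ := Algebra.mem_bot.mp hb
  intro hli
  simp only [← Algebra.commutes, ← Algebra.smul_def] at hli
  obtain ⟨-, hα⟩ := LinearIndependent.pair_iff.mp hli β (-α) (by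
    rw [smul_smul, smul_smul, mul_comm, neg_mul, neg_smul, add_neg_cancel])
  exact hli.ne_zero 0 (by simp [neg_eq_zero.mp hα])

end Algebra

theorem UniqueFactorizationMonoid.exists_eq_mul_eq_mul_isRelPrime {α : Type*}
    [CommMonoidWithZero α] [UniqueFactorizationMonoid α] (x y : α) :
    ∃ g x' y', x = g * x' ∧ y = g * y' ∧ IsRelPrime x' y' := by
  let := UniqueFactorizationMonoid.toGCDMonoid α
  obtain ⟨x', y', hx, hy, h⟩ := extract_gcd x y
  exact ⟨_, x', y', hx, hy, gcd_isUnit_iff_isRelPrime.mp h⟩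

theorem exists_eq_pow_of_pow_mul_eq_pow {R : Type*} [CommRing R] [IsDomain R]
    [IsIntegrallyClosed R] {n : ℕ} (hn : n ≠ 0) {g x y : R} (hg : g ≠ 0)
    (h : g ^ n * x = y ^ n) : ∃ z, x = z ^ n := by
  obtain ⟨z, rfl⟩ := (IsIntegrallyClosed.pow_dvd_pow_iff hn).mp ⟨x, h.symm⟩
  exact ⟨z, mul_left_cancel₀ (pow_ne_zero n hg) (by rw [h, mul_pow])⟩

namespace MvPolynomial

variable {σ K : Type*}

theorem totalDegree_pow_of_isDomain {R : Type*} [CommRing R] [IsDomain R]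
    (f : MvPolynomial σ R) (n : ℕ) : (f ^ n).totalDegree = n * f.totalDegree := by
  rcases eq_or_ne f 0 with rfl | hf
  · rcases n with _ | n <;> simp
  induction n with
  | zero => simp
  | succ n ih => rw [pow_succ, totalDegree_mul_of_isDomain (pow_ne_zero n hf) hf, ih]; ring

variable [Field K]

theorem totalDegree_sub_smul_le (a b : MvPolynomial σ K) (c : K) :
    (a - c • b).totalDegree ≤ max a.totalDegree b.totalDegree :=
  (totalDegree_sub a _).trans (max_le_max le_rfl (totalDegree_smul_le c b))

theorem mem_bot_of_eq_pow_of_totalDegree_lt {p : ℕ} {x e : MvPolynomial σ K} (hx : x = e ^ p)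
    (hdeg : x.totalDegree < p) : x ∈ (⊥ : Subalgebra K (MvPolynomial σ K)) := by
  have hx0 : x.totalDegree = 0 := by
    rw [hx, totalDegree_pow_of_isDomain] at hdeg ⊢
    have : e.totalDegree < 1 := Nat.lt_of_mul_lt_mul_left (a := p) (by rwa [mul_one])
    simp [Nat.lt_one_iff.mp this]
  rw [totalDegree_eq_zero_iff_eq_C.mp hx0]
  exact Subalgebra.algebraMap_mem _ _

theorem mem_bot_of_sub_smul_eq_pow {p : ℕ} {a b : MvPolynomial σ K} {u v : K} (huv : u ≠ v)
    (ha : a.totalDegree < p) (hb : b.totalDegree < p)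
    (hu : ∃ e, a - u • b = e ^ p) (hv : ∃ e, a - v • b = e ^ p) :
    a ∈ (⊥ : Subalgebra K (MvPolynomial σ K)) ∧ b ∈ (⊥ : Subalgebra K (MvPolynomial σ K)) := by
  have hmem {c : K} (hc : ∃ e, a - c • b = e ^ p) : a - c • b ∈ (⊥ : Subalgebra K _) :=
    mem_bot_of_eq_pow_of_totalDegree_lt hc.choose_spec
      ((totalDegree_sub_smul_le a b c).trans_lt (max_lt ha hb))
  exact Subalgebra.mem_bot_of_sub_smul_mem_bot huv (hmem hu) (hmem hv)

variable [IsAlgClosed K]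

theorem exists_eq_pow_of_associated_pow {p : ℕ} (hp : p ≠ 0) {d f : MvPolynomial σ K}
    (h : Associated (d ^ p) f) : ∃ e, f = e ^ p := by
  obtain ⟨u, rfl⟩ := h
  obtain ⟨k, -, hk⟩ := isUnit_iff_eq_C_of_isReduced.mp u.isUnit
  rw [hk, mul_comm, ← smul_eq_C_mul]
  exact exists_smul_pow_eq_pow hp k d

theorem exists_eq_pow_of_mul_eq_pow_of_isRelPrime {p : ℕ} (hp : p ≠ 0)
    {a b c : MvPolynomial σ K} (hab : IsRelPrime a b) (h : a * b = c ^ p) : ∃ e, a = e ^ p := by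
  let := UniqueFactorizationMonoid.toGCDMonoid (MvPolynomial σ K)
  obtain ⟨d, hd⟩ := exists_associated_pow_of_mul_eq_pow (gcd_isUnit_iff_isRelPrime.mpr hab) h
  exact exists_eq_pow_of_associated_pow hp hd

theorem exists_sub_smul_eq_pow {ζ : K} {p : ℕ} (hζ : IsPrimitiveRoot ζ p) (hp : 0 < p)
    {a b : MvPolynomial σ K} (hab : IsRelPrime a b) {d : K} (hd : d ≠ 0)
    (h : ∃ c, a ^ p - d ^ p • b ^ p = c ^ p) : ∃ e, a - d • b = e ^ p := by
  obtain ⟨c, hc⟩ := h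
  obtain ⟨k, rfl⟩ := Nat.exists_eq_add_of_lt hp
  rw [hζ.pow_sub_smul_pow_eq_prod hp, prod_range_succ', pow_zero, one_mul, mul_comm] at hc
  refine exists_eq_pow_of_mul_eq_pow_of_isRelPrime hp.ne' (IsRelPrime.prod_right fun i hi => ?_) hc
  refine hab.sub_smul_sub_smul fun h => hζ.pow_ne_one_of_pos_of_lt i.succ_ne_zero
    (by simpa using hi) (mul_right_cancel₀ hd ?_)
  rw [one_mul, ← h]

theorem mem_bot_of_forall_sub_smul_eq_pow [CharZero K] {ζ : K} {p : ℕ}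
    (hζ : IsPrimitiveRoot ζ p) (hp : 0 < p) {a b : MvPolynomial σ K} (hab : IsRelPrime a b)
    (ha : a.totalDegree < p ^ 2) (hb : b.totalDegree < p ^ 2)
    (h : ∀ c : K, c ≠ 0 → ∃ e, a - c • b = e ^ p) :
    a ∈ (⊥ : Subalgebra K (MvPolynomial σ K)) ∧ b ∈ (⊥ : Subalgebra K (MvPolynomial σ K)) := by
  obtain ⟨α, hα⟩ := h 1 one_ne_zero
  obtain ⟨β, hβ⟩ := h (-1) (by norm_num)
  have hαβ : IsRelPrime α β := by
    have := hab.sub_smul_sub_smul (u := (1 : K)) (v := -1) (by norm_num)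
    rw [hα, hβ] at this
    exact (IsRelPrime.pow_left_iff hp).mp ((IsRelPrime.pow_right_iff hp).mp this)
  -- `α ^ p - t • β ^ p = (1 - t) • (a - c • b)` with `c = (1 + t) / (1 - t)`
  have hαβ_pow : ∀ t : K, t ≠ 1 → 1 + t ≠ 0 → ∃ e, α ^ p - t • β ^ p = e ^ p := by
    intro t ht1 ht2
    obtain ⟨e, he⟩ := h ((1 + t) / (1 - t)) (div_ne_zero ht2 (sub_ne_zero.mpr ht1.symm))
    obtain ⟨e', he'⟩ := exists_smul_pow_eq_pow hp.ne' (1 - t) e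
    refine ⟨e', ?_⟩
    rw [← he', ← he, ← hα, ← hβ, smul_sub (1 - t), smul_smul (1 - t),
      mul_div_cancel₀ _ (sub_ne_zero.mpr ht1.symm)]
    module
  have hdeg : ∀ {x : MvPolynomial σ K} {c : K}, x ^ p = a - c • b → x.totalDegree < p := by
    intro x c hx
    have := (totalDegree_sub_smul_le a b c).trans_lt (max_lt ha hb)
    rw [← hx, totalDegree_pow_of_isDomain, sq] at this
    exact Nat.lt_of_mul_lt_mul_left this
  obtain ⟨d₂, hd₂⟩ := IsAlgClosed.exists_pow_nat_eq (2 : K) hp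
  obtain ⟨d₃, hd₃⟩ := IsAlgClosed.exists_pow_nat_eq (3 : K) hp
  have hd₂₃ : d₂ ≠ d₃ := by rintro rfl; norm_num [hd₂] at hd₃
  obtain ⟨hα_mem, hβ_mem⟩ := mem_bot_of_sub_smul_eq_pow hd₂₃ (hdeg hα.symm) (hdeg hβ.symm)
    (exists_sub_smul_eq_pow hζ hp hαβ (ne_zero_pow hp.ne' (hd₂ ▸ two_ne_zero))
      (hd₂ ▸ hαβ_pow 2 (by norm_num) (by norm_num)))
    (exists_sub_smul_eq_pow hζ hp hαβ (ne_zero_pow hp.ne' (hd₃ ▸ three_ne_zero))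
      (hd₃ ▸ hαβ_pow 3 (by norm_num) (by norm_num)))
  exact Subalgebra.mem_bot_of_sub_smul_mem_bot (by norm_num : (1 : K) ≠ -1)
    (hα ▸ pow_mem hα_mem p) (hβ ▸ pow_mem hβ_mem p)

end MvPolynomial

theorem not_all_pth_powers_general (n : ℕ) (p : ℕ) (hp : 2 ≤ p)
    (ψ₁ ψ₂ : MvPolynomial (Fin n) ℂ)
    (h₁ : ψ₁.IsHomogeneous 2) (h₂ : ψ₂.IsHomogeneous 2)
    (hli : LinearIndependent ℂ ![ψ₁, ψ₂]) :
    ¬ ∀ lam mu : ℂ, ∃ ψ : MvPolynomial (Fin n) ℂ,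
        ψ.IsHomogeneous 2 ∧ lam • ψ₁ ^ p + mu • ψ₂ ^ p = ψ ^ p := by
  intro H
  obtain ⟨g, a, b, rfl, rfl, hab⟩ :=
    UniqueFactorizationMonoid.exists_eq_mul_eq_mul_isRelPrime ψ₁ ψ₂
  have hg : g ≠ 0 := fun h => hli.ne_zero 0 (by simp [h])
  have hζ := Complex.isPrimitiveRoot_exp p (by omega)
  have hpencil (c : ℂ) (hc : c ≠ 0) : ∃ e, a - c • b = e ^ p := by
    refine exists_sub_smul_eq_pow hζ (by omega) hab hc ?_
    obtain ⟨ψ, -, hψ⟩ := H 1 (-c ^ p)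
    refine exists_eq_pow_of_pow_mul_eq_pow (y := ψ) (by omega) hg ?_
    simp only [← hψ, mul_pow, smul_eq_C_mul, map_neg, map_one]
    ring
  have hdeg {x : MvPolynomial (Fin n) ℂ} (hx : (g * x).IsHomogeneous 2) (hx0 : g * x ≠ 0) :
      x.totalDegree < p ^ 2 :=
    calc x.totalDegree ≤ (g * x).totalDegree :=
          totalDegree_le_of_dvd_of_isDomain (dvd_mul_left x g) hx0
      _ ≤ 2 := hx.totalDegree_le
      _ < p ^ 2 := by nlinarith
  obtain ⟨ha, hb⟩ := mem_bot_of_forall_sub_smul_eq_pow hζ (by omega) hab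
    (hdeg h₁ (hli.ne_zero 0)) (hdeg h₂ (hli.ne_zero 1)) hpencil
  exact not_linearIndependent_mul_of_mem_bot g ha hb hli

/-- If `ψ₁, ψ₂` are linearly independent quadratic forms and `p ≥ 2`, then not
every linear combination `λψ₁^p + μψ₂^p` is a `p`-th power of a quadratic form. -/
theorem not_all_pth_powers (n : ℕ) (hn : 2 ≤ n) (p : ℕ) (hp : 2 ≤ p)
    (ψ₁ ψ₂ : MvPolynomial (Fin n) ℂ)
    (h₁ : ψ₁.IsHomogeneous 2) (h₂ : ψ₂.IsHomogeneous 2)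
    (hli : LinearIndependent ℂ ![ψ₁, ψ₂]) :
    ¬ ∀ lam mu : ℂ, ∃ ψ : MvPolynomial (Fin n) ℂ,
        ψ.IsHomogeneous 2 ∧ lam • ψ₁ ^ p + mu • ψ₂ ^ p = ψ ^ p :=
  not_all_pth_powers_general n p hp ψ₁ ψ₂ h₁ h₂ hli
end

section
/- Let n ≥ 2, and suppose q = X₀² + ⋯ + X_{n−2}² + X_{n−1}(α₀X₀ + ⋯ + α_{n−1}X_{n−1}) is a quadratic form on ℂⁿ. Then q has rank n if and only if α₀² + ⋯ + α_{n−2}² − 4α_{n−1} ≠ 0. -/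
/-!
With `X_{n−1}` as the last coordinate, the symmetric matrix of `q` is the identity of size `n − 1`
bordered by the column and row `α/2`. Its determinant is the Schur complement
`α_{n−1} − ∑ (α_i/2)²`, which is `−¼ (α₀² + ⋯ + α_{n−2}² − 4α_{n−1})`, and full rank means
nonzero determinant.
-/

theorem Matrix.rank_eq_card_iff_det_ne_zero {K ι : Type*} [Field K] [Fintype ι] [DecidableEq ι]
    (A : Matrix ι ι K) : A.rank = Fintype.card ι ↔ A.det ≠ 0 := by
  rw [rank_eq_finrank_span_cols, eq_comm, ← Set.finrank,
    ← linearIndependent_iff_card_eq_finrank_span,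
    linearIndependent_cols_iff_isUnit, isUnit_iff_isUnit_det, isUnit_iff_ne_zero]

theorem Matrix.det_eq_sub_sum_of_submatrix_castSucc_eq_one {R : Type*} [CommRing R] {m : ℕ}
    (A : Matrix (Fin (m + 1)) (Fin (m + 1)) R)
    (hA : A.submatrix Fin.castSucc Fin.castSucc = 1) :
    A.det = A (Fin.last m) (Fin.last m) -
      ∑ i : Fin m, A (Fin.last m) i.castSucc * A i.castSucc (Fin.last m) := by
  rw [← det_submatrix_equiv_self finSumFinEquiv, ← fromBlocks_toBlocks (A.submatrix _ _)]
  have h11 : (A.submatrix finSumFinEquiv finSumFinEquiv).toBlocks₁₁ = 1 := hA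
  rw [h11, det_fromBlocks_one₁₁, det_unique]
  simp only [toBlocks₁₂, toBlocks₂₁, toBlocks₂₂, submatrix_apply, finSumFinEquiv_apply_left,
    finSumFinEquiv_apply_right, sub_apply, of_apply, mul_apply]
  rfl

/-- The quadratic form `X₀² + ⋯ + X_{n−2}² + X_{n−1}(α₀X₀ + ⋯ + α_{n−1}X_{n−1})`
on `ℂⁿ` has rank `n` iff `α₀² + ⋯ + α_{n−2}² − 4α_{n−1} ≠ 0`. -/
theorem rank_n_iff (n : ℕ) (hn : 2 ≤ n) (α : Fin n → ℂ) :
    (Matrix.of (fun i j : Fin n =>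
        (if i = j ∧ (i : ℕ) < n - 1 then (1 : ℂ) else 0)
        + (if (i : ℕ) = n - 1 then α j / 2 else 0)
        + (if (j : ℕ) = n - 1 then α i / 2 else 0))).rank = n
    ↔ (∑ i ∈ Finset.univ.filter (fun i : Fin n => (i : ℕ) < n - 1), (α i)^2)
        - 4 * α ⟨n - 1, by omega⟩ ≠ 0 := by
  obtain ⟨m, rfl⟩ : ∃ m, n = m + 1 := ⟨n - 1, by omega⟩
  have hsum : ∑ i ∈ Finset.univ.filter (fun i : Fin (m + 1) => (i : ℕ) < m + 1 - 1), α i ^ 2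
      = ∑ i : Fin m, α i.castSucc ^ 2 := by
    simp [Finset.sum_filter, Fin.sum_univ_castSucc]
  have hlast : α ⟨m + 1 - 1, by omega⟩ = α (Fin.last m) := rfl
  refine (Fintype.card_fin (m + 1) ▸ Matrix.rank_eq_card_iff_det_ne_zero _).trans ?_
  rw [Matrix.det_eq_sub_sum_of_submatrix_castSucc_eq_one, hsum, hlast]
  · simp only [Fin.ext_iff, add_tsub_cancel_right, Matrix.of_apply, Fin.val_last, lt_self_iff_false,
      and_false, ↓reduceIte, zero_add, add_halves, Fin.val_castSucc, fun i : Fin m => i.isLt.ne,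
      add_zero, Fin.is_lt, and_true]
    rw [← mul_ne_zero_iff_left (by norm_num : (-4 : ℂ) ≠ 0)]
    congr! 1
    simp_rw [div_mul_div_comm, ← sq, ← Finset.sum_div]
    ring
  · ext i j
    simp [Matrix.one_apply, Fin.ext_iff, i.isLt.ne, j.isLt.ne]
end
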